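/- Let A be a finite-dimensional simple associative Γ-graded commutative algebra over ℝ whose degree-zero component A₀ is isomorphic to ℂ. Then every nonzero homogeneous component A_γ is 2-dimensional over ℝ and contains elements α₊, α₋ with α₊² = 1 and α₋² = -1. -/

import Mathlib

/-!
A nonzero homogeneous element `a` of degree `γ` sign-commutes with every homogeneous element, so
`A * a` is a two-sided ideal; by simplicity `a` has a left inverse, hence `w = a * a` is a nonzero
element of `A₀ ≅ ℂ`. Taking square roots of `± w⁻¹` in `A₀` (which is central) and multiplying them
by `a` produces `α₊` and `α₋`. Since `w` is invertible, right multiplication by `a` is injective and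
swaps `A₀` and `A_γ`, so both have real dimension `dim ℂ = 2`.
-/

theorem exists_mul_self_mul_eq_of_ringEquiv {R K : Type*} [Semiring R] [Field K] [IsAlgClosed K]
    (e : R ≃+* K) {w : R} (hw : w ≠ 0) (z : R) : ∃ u, u * u * w = z := by
  have hew : e w ≠ 0 := (map_ne_zero_iff e e.injective).mpr hw
  obtain ⟨v, hv⟩ := IsAlgClosed.exists_eq_mul_self (e z / e w)
  exact ⟨e.symm v, e.injective (by simp [← hv, div_mul_cancel₀ _ hew])⟩

theorem IsSimpleRing.exists_mul_eq_one_of_forall_exists_mul_eq_mul {A : Type*} [Ring A]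
    [IsSimpleRing A] {a : A} (ha : a ≠ 0) (hnormal : ∀ y, ∃ d, a * y = d * a) :
    ∃ c, c * a = 1 := by
  let I : TwoSidedIdeal A := TwoSidedIdeal.mk' {x | ∃ c, x = c * a} ⟨0, (zero_mul a).symm⟩
    (fun ⟨c, hc⟩ ⟨c', hc'⟩ => ⟨c + c', by rw [hc, hc', add_mul]⟩)
    (fun ⟨c, hc⟩ => ⟨-c, by rw [hc, neg_mul]⟩)
    (fun {x _} ⟨c, hc⟩ => ⟨x * c, by rw [hc, mul_assoc]⟩)
    (fun {_ y} ⟨c, hc⟩ => by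
      obtain ⟨d, hd⟩ := hnormal y
      exact ⟨c * d, by rw [hc, mul_assoc, hd, mul_assoc]⟩)
  have haI : a ∈ I := (TwoSidedIdeal.mem_mk' ..).mpr ⟨1, (one_mul a).symm⟩
  have hI : I = ⊤ := (IsSimpleRing.simple.eq_bot_or_eq_top I).resolve_left
    fun h => ha ((TwoSidedIdeal.mem_bot A).mp (h ▸ haI))
  have h1 : (1 : A) ∈ I := hI ▸ trivial
  obtain ⟨c, hc⟩ := (TwoSidedIdeal.mem_mk' ..).mp h1
  exact ⟨c, hc.symm⟩

namespace DirectSum.Decomposition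

variable {ι A σ : Type*} [DecidableEq ι] [Ring A] [SetLike σ A] [AddSubmonoidClass σ A]
  (𝒜 : ι → σ) [DirectSum.Decomposition 𝒜]

theorem commute_of_forall_mem {z : A} (hz : ∀ i, ∀ b ∈ 𝒜 i, Commute z b) (b : A) :
    Commute z b :=
  DirectSum.Decomposition.inductionOn 𝒜 (Commute.zero_right z) (fun m => hz _ _ m.2)
    (fun _ _ => Commute.add_right) b

theorem exists_mul_eq_mul_of_forall_mem {a : A} (ha : ∀ i, ∀ b ∈ 𝒜 i, ∃ d, a * b = d * a)
    (y : A) : ∃ d, a * y = d * a :=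
  DirectSum.Decomposition.inductionOn 𝒜 ⟨0, by rw [mul_zero, zero_mul]⟩ (fun m => ha _ _ m.2)
    (fun _ _ ⟨d, hd⟩ ⟨d', hd'⟩ => ⟨d + d', by rw [mul_add, hd, hd', add_mul]⟩) y

end DirectSum.Decomposition

theorem finrank_le_finrank_of_isRightRegular {K A ι : Type*} [Field K] [Ring A] [Algebra K A]
    [FiniteDimensional K A] [AddMonoid ι] (𝒜 : ι → Submodule K A) [SetLike.GradedMonoid 𝒜]
    {γ i j : ι} {a : A} (ha : a ∈ 𝒜 γ) (hreg : IsRightRegular a) (hij : i + γ = j) :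
    Module.finrank K (𝒜 i) ≤ Module.finrank K (𝒜 j) :=
  LinearMap.finrank_le_finrank_of_injective
    (f := (LinearMap.mulRight K a).restrict fun _ hx => hij ▸ SetLike.mul_mem_graded hx ha)
    fun _ _ h => Subtype.ext (hreg (congrArg Subtype.val h))

def IsGradedCommutative {n : ℕ} {A : Type*} [Ring A] [Algebra ℝ A]
    (𝒜 : (Fin n → ZMod 2) → Submodule ℝ A) : Prop :=
  ∀ (γ γ' : Fin n → ZMod 2) (a b : A), a ∈ 𝒜 γ → b ∈ 𝒜 γ' →
    a * b = (-1 : A) ^ (∑ i, γ i * γ' i).val * (b * a)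

section ZModTwoGraded

variable {n : ℕ} {A : Type*} [Ring A] [Algebra ℝ A] {𝒜 : (Fin n → ZMod 2) → Submodule ℝ A}

theorem mul_self_mem_zero [SetLike.GradedMonoid 𝒜] {γ : Fin n → ZMod 2} {a : A} (ha : a ∈ 𝒜 γ) :
    a * a ∈ 𝒜 0 := by
  simpa only [ZModModule.add_self] using SetLike.mul_mem_graded ha ha

variable [GradedAlgebra 𝒜]

theorem IsGradedCommutative.commute_of_mem_zero (h𝒜 : IsGradedCommutative 𝒜) {z : A}
    (hz : z ∈ 𝒜 0) (b : A) : Commute z b :=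
  DirectSum.Decomposition.commute_of_forall_mem 𝒜
    (fun i b hb => by simpa [Commute, SemiconjBy] using h𝒜 0 i z b hz hb) b

theorem IsGradedCommutative.mul_mul_mul_self (h𝒜 : IsGradedCommutative 𝒜) {d : A} (hd : d ∈ 𝒜 0)
    (a : A) : (d * a) * (d * a) = d * d * (a * a) := by
  rw [mul_assoc, ← mul_assoc a, ← (h𝒜.commute_of_mem_zero hd a).eq, mul_assoc, mul_assoc]

theorem IsGradedCommutative.exists_mul_eq_mul (h𝒜 : IsGradedCommutative 𝒜)
    {γ : Fin n → ZMod 2} {a : A} (ha : a ∈ 𝒜 γ) (y : A) : ∃ d, a * y = d * a :=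
  DirectSum.Decomposition.exists_mul_eq_mul_of_forall_mem 𝒜
    (fun i b hb => ⟨_, by rw [h𝒜 γ i a b ha hb, mul_assoc]⟩) y

theorem IsGradedCommutative.mul_self_ne_zero [IsSimpleRing A] (h𝒜 : IsGradedCommutative 𝒜)
    {γ : Fin n → ZMod 2} {a : A} (ha : a ∈ 𝒜 γ) (ha0 : a ≠ 0) : a * a ≠ 0 := by
  obtain ⟨c, hc⟩ :=
    IsSimpleRing.exists_mul_eq_one_of_forall_exists_mul_eq_mul ha0 (h𝒜.exists_mul_eq_mul ha)
  intro h
  exact ha0 (by rw [← one_mul a, ← hc, mul_assoc, h, mul_zero])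

end ZModTwoGraded

/-- Let `A` be a finite-dimensional simple associative `(ℤ/2)ⁿ`-graded
commutative ℝ-algebra (standard scalar product) whose degree-zero component `A₀` is
isomorphic to ℂ as an ℝ-algebra.  Then every nonzero homogeneous component `A_γ` is
2-dimensional over ℝ and contains elements `α₊, α₋` with `α₊² = 1` and `α₋² = -1`. -/
theorem stmt14 {n : ℕ} {A : Type*} [Ring A] [Algebra ℝ A] [FiniteDimensional ℝ A]
    (𝒜 : (Fin n → ZMod 2) → Submodule ℝ A) (hgr : GradedAlgebra 𝒜)
    (hcomm : ∀ (γ γ' : Fin n → ZMod 2) (a b : A), a ∈ 𝒜 γ → b ∈ 𝒜 γ' →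
      a * b = (-1 : A) ^ (∑ i, γ i * γ' i).val * (b * a))
    (hsimple : IsSimpleRing A)
    (hA0 : ∃ S : Subalgebra ℝ A, Subalgebra.toSubmodule S = 𝒜 (0 : Fin n → ZMod 2) ∧
      Nonempty (S ≃ₐ[ℝ] ℂ)) :
    ∀ γ : Fin n → ZMod 2, 𝒜 γ ≠ ⊥ →
      Module.finrank ℝ (𝒜 γ) = 2 ∧
      (∃ αp ∈ 𝒜 γ, αp * αp = 1) ∧ (∃ αm ∈ 𝒜 γ, αm * αm = -1) := by
  intro γ hγ
  have := hgr
  have := hsimple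
  have h𝒜 : IsGradedCommutative 𝒜 := hcomm
  obtain ⟨S, hS, ⟨e⟩⟩ := hA0
  have hmemS : ∀ x, x ∈ S ↔ x ∈ 𝒜 0 := SetLike.ext_iff.mp hS
  have hS0 : ∀ x : S, (x : A) ∈ 𝒜 0 := fun x => (hmemS x).mp x.2
  obtain ⟨a, ha, ha0⟩ := (Submodule.ne_bot_iff _).mp hγ
  let w : S := ⟨a * a, (hmemS _).mpr (mul_self_mem_zero ha)⟩
  have hw0 : w ≠ 0 := fun h => h𝒜.mul_self_ne_zero ha ha0 (congrArg Subtype.val h)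
  obtain ⟨u, hu⟩ := exists_mul_self_mul_eq_of_ringEquiv e.toRingEquiv hw0 1
  obtain ⟨v, hv⟩ := exists_mul_self_mul_eq_of_ringEquiv e.toRingEquiv hw0 (-1)
  have hmem : ∀ d : S, (d : A) * a ∈ 𝒜 γ := fun d => by
    simpa only [zero_add] using SetLike.mul_mem_graded (hS0 d) ha
  have hreg : IsRightRegular a := isRightRegular_of_mul_eq_one (b := a * (u * u : S)) <| by
    rw [← mul_assoc]
    exact (h𝒜.commute_of_mem_zero (hS0 w) _).eq.trans (congrArg Subtype.val hu)
  have hdim : Module.finrank ℝ (𝒜 0) = 2 := by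
    rw [← hS, ← Complex.finrank_real_complex]
    exact e.toLinearEquiv.finrank_eq
  refine ⟨le_antisymm ?_ ?_,
    ⟨u * a, hmem u, (h𝒜.mul_mul_mul_self (hS0 u) a).trans (congrArg Subtype.val hu)⟩,
    ⟨v * a, hmem v, (h𝒜.mul_mul_mul_self (hS0 v) a).trans (congrArg Subtype.val hv)⟩⟩
  · exact hdim ▸ finrank_le_finrank_of_isRightRegular 𝒜 ha hreg (ZModModule.add_self γ)
  · exact hdim ▸ finrank_le_finrank_of_isRightRegular 𝒜 ha hreg (zero_add γ)
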